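/- The function P(x,y,t) = (√3 / (π D² (t-t₀)²)) · exp(−(6(y − x(t−t₀)/2)² / (D²(t−t₀)³) + x² / (2D²(t−t₀)))) satisfies the PDE ∂P/∂t + x ∂P/∂y = (D²/2) ∂²P/∂x² for all t > t₀ and (x,y) ∈ ℝ². -/

import Mathlib

open Real

/-- The self-similar Gaussian density of a Brownian particle diffusing in the
`x`-direction of a Couette shear flow. -/
noncomputable def shearDensity (D t₀ x y t : ℝ) : ℝ :=
  Real.sqrt 3 / (Real.pi * D ^ 2 * (t - t₀) ^ 2) *
    Real.exp (-(6 * (y - x * (t - t₀) / 2) ^ 2 / (D ^ 2 * (t - t₀) ^ 3)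
      + x ^ 2 / (2 * D ^ 2 * (t - t₀))))

/-!
Write `τ = t - t₀` and `u = y - x τ / 2` for the coordinate comoving with the mean shear.
Every first derivative of `P = shearDensity` is `P` times a rational function of `x, u, τ`
(the logarithmic derivative), and so is `∂²P/∂x² = P (h² + ∂ₓh)` with `h = ∂ₓ log P`.
After dividing by `P` the PDE becomes a rational identity in `x, u, τ, D`.
-/

theorem hasDerivAt_deriv_of_hasDerivAt_mul {f h : ℝ → ℝ} {h' x : ℝ}
    (hf : ∀ z, HasDerivAt f (f z * h z) z) (hh : HasDerivAt h h' x) :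
    HasDerivAt (deriv f) (f x * (h x ^ 2 + h')) x := by
  have hderiv : deriv f = fun z => f z * h z := funext fun z => (hf z).deriv
  rw [hderiv]
  exact ((hf x).mul hh).congr_deriv (by ring)

theorem shear_logDeriv_identity (D τ x u : ℝ) (hD : D ≠ 0) (hτ : τ ≠ 0) :
    (-(2 / τ) + 6 * x * u / (D ^ 2 * τ ^ 3) + 18 * u ^ 2 / (D ^ 2 * τ ^ 4)
        + x ^ 2 / (2 * D ^ 2 * τ ^ 2))
      + x * (-(12 * u / (D ^ 2 * τ ^ 3)))
      = D ^ 2 / 2 * ((6 * u / (D ^ 2 * τ ^ 2) - x / (D ^ 2 * τ)) ^ 2 - 4 / (D ^ 2 * τ)) := by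
  field_simp
  ring

theorem hasDerivAt_const_sub_mul_div_two (y τ x : ℝ) :
    HasDerivAt (fun x' : ℝ => y - x' * τ / 2) (-(τ / 2)) x := by
  simpa using (((hasDerivAt_id x).mul_const τ).div_const 2).const_sub y

section Derivatives

variable (D t₀ x y t : ℝ)

theorem hasDerivAt_shearDensity_y :
    HasDerivAt (fun y' => shearDensity D t₀ x y' t)
      (shearDensity D t₀ x y t * (-(12 * (y - x * (t - t₀) / 2) / (D ^ 2 * (t - t₀) ^ 3))))
      y := by
  have hu : HasDerivAt (fun y' : ℝ => y' - x * (t - t₀) / 2) 1 y :=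
    (hasDerivAt_id y).sub_const _
  have hexp := ((((hu.pow 2).const_mul 6).div_const (D ^ 2 * (t - t₀) ^ 3)).add_const
    (x ^ 2 / (2 * D ^ 2 * (t - t₀)))).neg.exp
  refine (hexp.const_mul (√3 / (π * D ^ 2 * (t - t₀) ^ 2))).congr_deriv ?_
  simp only [Pi.pow_apply, Pi.neg_apply, shearDensity]
  ring

noncomputable def shearLogDerivX (x' : ℝ) : ℝ :=
  6 * (y - x' * (t - t₀) / 2) / (D ^ 2 * (t - t₀) ^ 2) - x' / (D ^ 2 * (t - t₀))

theorem hasDerivAt_shearDensity_x (hτ : t - t₀ ≠ 0) :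
    HasDerivAt (fun x' => shearDensity D t₀ x' y t)
      (shearDensity D t₀ x y t * shearLogDerivX D t₀ y t x) x := by
  have hu := hasDerivAt_const_sub_mul_div_two y (t - t₀) x
  have hexp := ((((hu.pow 2).const_mul 6).div_const (D ^ 2 * (t - t₀) ^ 3)).add
    ((hasDerivAt_pow 2 x).div_const (2 * D ^ 2 * (t - t₀)))).neg.exp
  refine (hexp.const_mul (√3 / (π * D ^ 2 * (t - t₀) ^ 2))).congr_deriv ?_
  simp only [Pi.pow_apply, Pi.add_apply, Pi.neg_apply, shearDensity, shearLogDerivX]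
  field_simp
  ring

theorem hasDerivAt_shearLogDerivX (hτ : t - t₀ ≠ 0) :
    HasDerivAt (shearLogDerivX D t₀ y t) (-(4 / (D ^ 2 * (t - t₀)))) x := by
  have hu := hasDerivAt_const_sub_mul_div_two y (t - t₀) x
  refine (((hu.const_mul 6).div_const (D ^ 2 * (t - t₀) ^ 2)).sub
    ((hasDerivAt_id x).div_const (D ^ 2 * (t - t₀)))).congr_deriv ?_
  field_simp
  ring

theorem hasDerivAt_shearDensity_t (hD : D ≠ 0) (hτ : t - t₀ ≠ 0) :
    HasDerivAt (fun s => shearDensity D t₀ x y s)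
      (shearDensity D t₀ x y t *
        (-(2 / (t - t₀)) + 6 * x * (y - x * (t - t₀) / 2) / (D ^ 2 * (t - t₀) ^ 3)
          + 18 * (y - x * (t - t₀) / 2) ^ 2 / (D ^ 2 * (t - t₀) ^ 4)
          + x ^ 2 / (2 * D ^ 2 * (t - t₀) ^ 2))) t := by
  have hτ' : HasDerivAt (fun s : ℝ => s - t₀) 1 t := (hasDerivAt_id t).sub_const t₀
  have hu : HasDerivAt (fun s : ℝ => y - x * (s - t₀) / 2) (-(x * 1 / 2)) t :=
    ((hτ'.const_mul x).div_const 2).const_sub y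
  have hexp := ((((hu.pow 2).const_mul 6).div ((hτ'.pow 3).const_mul (D ^ 2))
    (by simp [hD, hτ])).add ((hasDerivAt_const t (x ^ 2)).div (hτ'.const_mul (2 * D ^ 2))
    (by simp [hD, hτ]))).neg.exp
  have hpre := (hasDerivAt_const t √3).div ((hτ'.pow 2).const_mul (π * D ^ 2))
    (by simp [hD, hτ, pi_ne_zero])
  refine (hpre.mul hexp).congr_deriv ?_
  simp only [Pi.pow_apply, Pi.add_apply, Pi.neg_apply, Pi.div_apply, shearDensity]
  field_simp
  ring

end Derivatives

theorem shearDensity_satisfies_pde (D t₀ : ℝ) (hD : 0 < D) :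
    ∀ x y t : ℝ, t₀ < t →
      deriv (fun s => shearDensity D t₀ x y s) t
        + x * deriv (fun y' => shearDensity D t₀ x y' t) y
      = D ^ 2 / 2 *
          deriv (fun x' => deriv (fun x'' => shearDensity D t₀ x'' y t) x') x := by
  intro x y t ht
  have hτ : t - t₀ ≠ 0 := sub_ne_zero.mpr ht.ne'
  have hxx := hasDerivAt_deriv_of_hasDerivAt_mul
    (fun x' => hasDerivAt_shearDensity_x D t₀ x' y t hτ)
    (hasDerivAt_shearLogDerivX D t₀ x y t hτ)
  rw [(hasDerivAt_shearDensity_t D t₀ x y t hD.ne' hτ).deriv,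
    (hasDerivAt_shearDensity_y D t₀ x y t).deriv, hxx.deriv, shearLogDerivX]
  linear_combination shearDensity D t₀ x y t *
    shear_logDeriv_identity D (t - t₀) x (y - x * (t - t₀) / 2) hD.ne' hτ
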